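/- For every real ε with 0 < ε ≤ 1/4 and every natural number n ≥ 1, there exists a subset A of the Hamming cube {0,1}ⁿ with |A| ≥ exp(2·(1/2 − 2ε)²·n) such that any two distinct elements x, y ∈ A satisfy d_h(x,y) ≥ 2ε. -/

import Mathlib

/-!
Gilbert–Varshamov with a Hoeffding tail bound. Let `m = ⌊2εn⌋`. A largest set of words at pairwise
Hamming distance `> m` is `m`-covering, so `2ⁿ ≤ |A| · V`, where `V = ∑_{k ≤ m} (n choose k)` is the
volume of a Hamming ball of radius `m`. Exponential moments (`cosh x ≤ exp (x²/2)`) give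
`V ≤ 2ⁿ exp (-2 (1/2 - 2ε)² n)` as soon as `2ε ≤ 1/2`, hence the bound on `|A|`.
-/

open Finset Real

theorem one_add_exp_neg_le (t : ℝ) : exp (-t) + 1 ≤ 2 * exp (-t / 2 + t ^ 2 / 8) := by
  have hcosh : exp (-t) + 1 = 2 * (exp (-t / 2) * cosh (t / 2)) := by
    rw [cosh_eq, mul_left_comm, mul_div_cancel₀ _ two_ne_zero, mul_add, ← exp_add, ← exp_add]
    ring_nf
    simp [add_comm]
  rw [hcosh, exp_add]
  gcongr
  calc cosh (t / 2) ≤ exp ((t / 2) ^ 2 / 2) := cosh_le_exp_half_sq _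
    _ = exp (t ^ 2 / 8) := by ring_nf

theorem sum_range_choose_le_exp_mul {n m : ℕ} (hmn : m ≤ n) {t : ℝ} (ht : 0 ≤ t) :
    ∑ k ∈ range (m + 1), (n.choose k : ℝ) ≤ exp (t * m) * (exp (-t) + 1) ^ n := by
  calc ∑ k ∈ range (m + 1), (n.choose k : ℝ)
      ≤ ∑ k ∈ range (m + 1), exp (-t) ^ k * 1 ^ (n - k) * n.choose k * exp (t * m) := by
        gcongr with k hk
        rw [one_pow, mul_one, ← exp_nat_mul, mul_comm, ← mul_assoc, ← exp_add]
        refine le_mul_of_one_le_left (by positivity) (one_le_exp ?_)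
        have : (k : ℝ) ≤ m := by exact_mod_cast Nat.lt_succ_iff.mp (mem_range.mp hk)
        nlinarith
    _ ≤ ∑ k ∈ range (n + 1), exp (-t) ^ k * 1 ^ (n - k) * n.choose k * exp (t * m) :=
        sum_le_sum_of_subset_of_nonneg (range_subset_range.mpr (by omega))
          (fun _ _ _ => by positivity)
    _ = exp (t * m) * (exp (-t) + 1) ^ n := by
        rw [add_pow, mul_sum]
        exact sum_congr rfl fun _ _ => mul_comm _ _

theorem sum_range_choose_le_two_pow_mul_exp {n m : ℕ} {p : ℝ} (hp : p ≤ 1 / 2)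
    (hm : (m : ℝ) ≤ p * n) :
    ∑ k ∈ range (m + 1), (n.choose k : ℝ) ≤ 2 ^ n * exp (-(2 * (1 / 2 - p) ^ 2 * n)) := by
  have hmn : m ≤ n := by
    have : (m : ℝ) ≤ n := by nlinarith [(n.cast_nonneg : (0 : ℝ) ≤ n)]
    exact_mod_cast this
  set t := 2 - 4 * p
  have ht : 0 ≤ t := by linarith
  calc ∑ k ∈ range (m + 1), (n.choose k : ℝ)
      ≤ exp (t * m) * (exp (-t) + 1) ^ n := sum_range_choose_le_exp_mul hmn ht
    _ ≤ exp (t * (p * n)) * (2 * exp (-t / 2 + t ^ 2 / 8)) ^ n := by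
        gcongr
        exact one_add_exp_neg_le t
    _ = 2 ^ n * exp (-(2 * (1 / 2 - p) ^ 2 * n)) := by
        rw [mul_pow, ← exp_nat_mul, mul_left_comm, ← exp_add]
        congr 2
        ring

theorem exists_hammingDist_separated_covering {ι : Type*} {β : ι → Type*} [Fintype ι]
    [∀ i, Fintype (β i)] [∀ i, DecidableEq (β i)] (m : ℕ) :
    ∃ A : Finset (∀ i, β i), (∀ x ∈ A, ∀ y ∈ A, x ≠ y → m < hammingDist x y) ∧
      ∀ z, ∃ a ∈ A, hammingDist z a ≤ m := by
  classical
  obtain ⟨A, hA, hmax⟩ := exists_max_image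
    ((univ : Finset (Finset (∀ i, β i))).filter fun A =>
      ∀ x ∈ A, ∀ y ∈ A, x ≠ y → m < hammingDist x y) card ⟨∅, by simp⟩
  rw [mem_filter] at hA
  refine ⟨A, hA.2, fun z => ?_⟩
  by_contra! hfar
  have hz : z ∉ A := fun hz => by simpa using hfar z hz
  have hsep : ∀ x ∈ insert z A, ∀ y ∈ insert z A, x ≠ y → m < hammingDist x y := by
    simp only [mem_insert]
    rintro x (rfl | hx) y (rfl | hy) hxy
    · exact absurd rfl hxy
    · exact hfar y hy
    · exact hammingDist_comm y x ▸ hfar x hx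
    · exact hA.2 x hx y hy hxy
  have := hmax _ (mem_filter.2 ⟨mem_univ _, hsep⟩)
  rw [card_insert_of_notMem hz] at this
  omega

section Bool

variable {ι : Type*} [Fintype ι] [DecidableEq ι]

theorem card_hammingDist_eq_bool (a : ι → Bool) (k : ℕ) :
    #{z | hammingDist z a = k} = (Fintype.card ι).choose k := by
  rw [← card_univ, ← card_powersetCard]
  refine card_nbij (fun z => ({i | z i ≠ a i} : Finset ι))
    (fun z hz => ?_) (fun z _ z' _ h => ?_) (fun S hS => ?_)
  · simpa [mem_powersetCard, hammingDist] using hz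
  · funext i
    have hi : z i ≠ a i ↔ z' i ≠ a i := by simpa using congrArg (i ∈ ·) h
    revert hi
    cases z i <;> cases z' i <;> cases a i <;> simp
  · refine ⟨fun i => if i ∈ S then !a i else a i, ?_, ?_⟩
    · have : ({i | (if i ∈ S then !a i else a i) ≠ a i} : Finset ι) = S := by
        ext i
        by_cases h : i ∈ S <;> simp [h]
      simpa [hammingDist, this] using hS
    · ext i
      by_cases h : i ∈ S <;> simp [h]

theorem card_hammingDist_le_bool (a : ι → Bool) (m : ℕ) :
    #{z | hammingDist z a ≤ m} = ∑ k ∈ range (m + 1), (Fintype.card ι).choose k := by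
  rw [card_eq_sum_card_fiberwise (f := (hammingDist · a)) (t := range (m + 1))]
  · refine sum_congr rfl fun k hk => ?_
    rw [← card_hammingDist_eq_bool a k, filter_filter]
    congr 1
    refine filter_congr fun z _ => ?_
    rw [mem_range, Nat.lt_succ_iff] at hk
    exact and_iff_right_of_imp fun h => h ▸ hk
  · intro z hz
    simpa [Nat.lt_succ_iff] using hz

theorem two_pow_le_card_mul_sum_choose {A : Finset (ι → Bool)} {m : ℕ}
    (hA : ∀ z, ∃ a ∈ A, hammingDist z a ≤ m) :
    2 ^ Fintype.card ι ≤ #A * ∑ k ∈ range (m + 1), (Fintype.card ι).choose k := by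
  calc 2 ^ Fintype.card ι = #(univ : Finset (ι → Bool)) := by simp
    _ ≤ #(A.biUnion fun a => {z | hammingDist z a ≤ m}) :=
        card_le_card fun z _ => mem_biUnion.2 (by simpa using hA z)
    _ ≤ ∑ a ∈ A, #{z | hammingDist z a ≤ m} := card_biUnion_le
    _ = #A * ∑ k ∈ range (m + 1), (Fintype.card ι).choose k := by
        simp [card_hammingDist_le_bool]

end Bool

theorem stmt1 (ε : ℝ) (hε0 : 0 < ε) (hε1 : ε ≤ 1 / 4) (n : ℕ) :
    ∃ A : Finset (Fin n → Bool),
      Real.exp (2 * (1 / 2 - 2 * ε) ^ 2 * n) ≤ A.card ∧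
      ∀ x ∈ A, ∀ y ∈ A, x ≠ y →
        2 * ε ≤ ((Finset.univ.filter fun i => x i ≠ y i).card : ℝ) / n := by
  set m := ⌊2 * ε * n⌋₊
  obtain ⟨A, hsep, hcov⟩ := exists_hammingDist_separated_covering (β := fun _ : Fin n => Bool) m
  refine ⟨A, ?_, fun x hx y hy hxy => ?_⟩
  · have hcount : (2 : ℝ) ^ n ≤ #A * ∑ k ∈ range (m + 1), (n.choose k : ℝ) := by
      exact_mod_cast Fintype.card_fin n ▸ two_pow_le_card_mul_sum_choose hcov
    have hball : ∑ k ∈ range (m + 1), (n.choose k : ℝ) ≤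
        2 ^ n * exp (-(2 * (1 / 2 - 2 * ε) ^ 2 * n)) :=
      sum_range_choose_le_two_pow_mul_exp (by linarith) (Nat.floor_le (by positivity))
    have hpos : 0 < ∑ k ∈ range (m + 1), (n.choose k : ℝ) :=
      sum_pos' (fun _ _ => by positivity) ⟨0, by simp⟩
    refine le_of_mul_le_mul_right ?_ hpos
    calc exp (2 * (1 / 2 - 2 * ε) ^ 2 * n) * ∑ k ∈ range (m + 1), (n.choose k : ℝ)
        ≤ exp (2 * (1 / 2 - 2 * ε) ^ 2 * n) * (2 ^ n * exp (-(2 * (1 / 2 - 2 * ε) ^ 2 * n))) := by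
          gcongr
      _ = 2 ^ n := by rw [mul_left_comm, ← exp_add, add_neg_cancel, exp_zero, mul_one]
      _ ≤ _ := hcount
  · have hfar : m < hammingDist x y := hsep x hx y hy hxy
    have hn : 0 < n :=
      Fintype.card_fin n ▸ (hammingDist_pos.2 hxy).trans_le hammingDist_le_card_fintype
    rw [le_div_iff₀ (by exact_mod_cast hn)]
    exact (Nat.lt_floor_add_one _).le.trans (by exact_mod_cast hfar)
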